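/- Let a ∈ ℝ and define for the symmetric 3-stage composition S_{ah}∘S_{(1-2a)h}∘S_{ah} the polynomials w31(a) = 2a³ + (1-2a)³, w71(a) = 2a⁷ + (1-2a)⁷, and the corresponding polynomials w72, w73, w74 arising from the BCH expansion. Then any reals b_1,...,b_k and a_1,...,a_k satisfying the order-6 conditions G_00 = 1, G_31 = G_51 = G_52 = G̃_63 = 0 also satisfy G_72 = -5/4536 + (5/126)·G_71. -/

import Mathlib

/-! The polynomial `w72` lies in the span of `1, w71, w31, w51, w52, w31²` (compare coefficients of
the polynomials of degree at most 7). Summing this identity against the weights `bᵢ` at the nodes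
`aᵢ`, every term except the constant and the `w71` term is killed by an order-6 condition. -/

noncomputable section
open Finset

/-- Coefficient of `Y₃` for the palindromic 3-stage composition
`S_{ah}∘S_{(1-2a)h}∘S_{ah}`. -/
def w31 (a : ℝ) : ℝ := 2 * a^3 + (1 - 2*a)^3

/-- Coefficient of `Y₅`. -/
def w51 (a : ℝ) : ℝ := 2 * a^5 + (1 - 2*a)^5

/-- Coefficient of `E₅₂ = [Y₁,[Y₁,Y₃]]` (from the BCH expansion). -/
def w52 (a : ℝ) : ℝ :=
  1/24 - (5/12) * a + (5/3) * a^2 - (37/12) * a^3 + (17/6) * a^4 - a^5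

/-- Coefficient of `Y₇`. -/
def w71 (a : ℝ) : ℝ := 2 * a^7 + (1 - 2*a)^7

/-- Coefficient of `E₇₂ = [Y₁,[Y₁,Y₅]]` (from the BCH expansion). -/
def w72 (a : ℝ) : ℝ :=
  1/24 - (7/12) * a + (7/2) * a^2 - (35/3) * a^3 + (70/3) * a^4
    - (111/4) * a^5 + (109/6) * a^6 - 5 * a^7

theorem w72_eq_combination (x : ℝ) :
    w72 x = -5/4536 + (5/126) * w71 x + (1/162) * w31 x - (5/216) * w51 x + (2/9) * w52 x
      + (7/648) * (w31 x)^2 := by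
  unfold w31 w51 w52 w71 w72
  ring

/-- Seventh-order barrier relation: any linear combination
`∑ bᵢ S_{aᵢh}∘S_{(1-2aᵢ)h}∘S_{aᵢh}` satisfying the order-6 conditions
`G₀₀ = 1`, `G₃₁ = G₅₁ = G₅₂ = G̃₆₃ = 0` also satisfies
`G₇₂ = -5/4536 + (5/126) G₇₁`. -/
theorem seventh_order_barrier_relation (k : ℕ) (b a : Fin k → ℝ)
    (h00 : ∑ i, b i = 1)
    (h31 : ∑ i, b i * w31 (a i) = 0)
    (h51 : ∑ i, b i * w51 (a i) = 0)
    (h52 : ∑ i, b i * w52 (a i) = 0)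
    (h63 : ∑ i, b i * (w31 (a i))^2 = 0) :
    ∑ i, b i * w72 (a i) = -5/4536 + (5/126) * ∑ i, b i * w71 (a i) := by
  have expand : ∑ i, b i * w72 (a i)
      = ∑ i, (-5/4536 * b i + (5/126) * (b i * w71 (a i))
          + (1/162) * (b i * w31 (a i)) - (5/216) * (b i * w51 (a i))
          + (2/9) * (b i * w52 (a i)) + (7/648) * (b i * (w31 (a i))^2)) := by
    refine sum_congr rfl fun i _ => ?_
    rw [w72_eq_combination]
    ring
  rw [expand]
  simp only [sum_add_distrib, sum_sub_distrib, ← mul_sum, h00, h31, h51, h52, h63]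
  ring

end
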